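/- Let n ≥ 2, r > 0, and let Ω ⊂ ℝ^n be a bounded open set containing B_r(0). Then Ω ∈ S_r if and only if there exists ε > 0 such that for every x ∈ ∂Ω the exterior cone EC(x,r) := (x + C(x, θ_x)) ∩ B_ε(x) is contained in Ωᶜ, where θ_x := arcsin(r/|x|) and C(x,θ) := { y : ⟨x,y⟩ ≥ cos θ · |x|·|y| }. -/

import Mathlib

open MeasureTheory Metric Set
open scoped ENNReal RealInnerProductSpace

noncomputable section

/-- `Ω` is a bounded open set, star-shaped with respect to the ball `B_r(0)`. -/
def StarShaped (n : ℕ) (r : ℝ) (Ω : Set (EuclideanSpace ℝ (Fin n))) : Prop :=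
  IsOpen Ω ∧ Bornology.IsBounded Ω ∧
    ∀ y ∈ ball (0 : EuclideanSpace ℝ (Fin n)) r, ∀ x ∈ Ω, segment ℝ y x ⊆ Ω

/-- The cone `C(x,θ) = { y : ⟨x,y⟩ ≥ cos θ |x||y| }`. -/
def cone (n : ℕ) (x : EuclideanSpace ℝ (Fin n)) (θ : ℝ) :
    Set (EuclideanSpace ℝ (Fin n)) :=
  {y | Real.cos θ * (‖x‖ * ‖y‖) ≤ ⟪x, y⟫}

/-- The exterior cone `EC(x,r) = (x + C(x,θ_x)) ∩ B_ε(x)`, with `θ_x = arcsin(r/|x|)`. -/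
def exteriorCone (n : ℕ) (r ε : ℝ) (x : EuclideanSpace ℝ (Fin n)) :
    Set (EuclideanSpace ℝ (Fin n)) :=
  ((fun y => x + y) '' cone n x (Real.arcsin (r / ‖x‖))) ∩ ball x ε

/-!
Write `c_x = √(‖x‖² - r²) = cos θ_x · ‖x‖`, so that `u ∈ C(x, θ_x)` reads `c_x ‖u‖ ≤ ⟪x, u⟫`:
the closed cone spanned by the directions `x - w`, `w ∈ B_r(0)`: the shadow of the ball behind `x`.

If `Ω ∈ S_r` and `x ∉ Ω`, no point `x + u` with `u` in this cone lies in `Ω`: pushing `u` slightly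
towards `x` puts it in the open cone, and then `x` lies on a segment from a point of `B_r(0)`
to a point of `Ω`. So any `ε` works.

Conversely, if a segment `[y, x]` with `y ∈ B_r(0)`, `x ∈ Ω` leaves `Ω`, let `p` be its last
point outside `Ω`. Then `p ∈ ∂Ω`, the direction `x - y` lies in `C(p, θ_p)` because `y ∈ B_r(0)`,
and the points of `(p, x]` close to `p` lie in `EC(p, r) ∩ Ω`.
-/

open Real Filter Topology

lemma cos_arcsin_div_mul {r R : ℝ} (hR : 0 ≤ R) :
    cos (arcsin (r / R)) * R = √(R ^ 2 - r ^ 2) := by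
  rcases hR.eq_or_lt with rfl | hR
  · simp [sqrt_eq_zero'.2 (neg_nonpos.2 (sq_nonneg r))]
  rw [cos_arcsin, show 1 - (r / R) ^ 2 = (R ^ 2 - r ^ 2) / R ^ 2 by field_simp,
    sqrt_div' _ (by positivity), sqrt_sq hR.le, div_mul_cancel₀ _ hR.ne']

section Cone

variable {n : ℕ} {x u : EuclideanSpace ℝ (Fin n)}

lemma mem_cone_arcsin_iff {r : ℝ} :
    u ∈ cone n x (arcsin (r / ‖x‖)) ↔ √(‖x‖ ^ 2 - r ^ 2) * ‖u‖ ≤ ⟪x, u⟫ := by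
  rw [cone, mem_ofPred_eq, ← mul_assoc, cos_arcsin_div_mul (norm_nonneg x)]

lemma smul_mem_cone {θ c : ℝ} (hu : u ∈ cone n x θ) (hc : 0 ≤ c) : c • u ∈ cone n x θ := by
  simp only [cone, mem_ofPred_eq, norm_smul, real_inner_smul_right, norm_of_nonneg hc] at hu ⊢
  linarith [mul_le_mul_of_nonneg_left hu hc]

end Cone

section Shadow

variable {E : Type*} [NormedAddCommGroup E] [InnerProductSpace ℝ E]

lemma norm_add_smul_sq_mul_sub_inner_sq (y d : E) (s : ℝ) :
    ‖y + s • d‖ ^ 2 * ‖d‖ ^ 2 - ⟪y + s • d, d⟫ ^ 2 = ‖y‖ ^ 2 * ‖d‖ ^ 2 - ⟪y, d⟫ ^ 2 := by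
  rw [norm_add_sq_real, inner_add_left, norm_smul, real_inner_smul_left, real_inner_smul_right,
    real_inner_self_eq_norm_sq, Real.norm_eq_abs, mul_pow, sq_abs]
  ring

lemma sqrt_sub_sq_mul_norm_le_inner {r s : ℝ} {y d : E} (hy : ‖y‖ < r)
    (hp : r ≤ ‖y + s • d‖) (hs : 0 ≤ s) :
    √(‖y + s • d‖ ^ 2 - r ^ 2) * ‖d‖ ≤ ⟪y + s • d, d⟫ := by
  set p := y + s • d with hp_def
  have hpp : ‖p‖ ^ 2 = ⟪p, y⟫ + s * ⟪p, d⟫ := by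
    rw [← real_inner_self_eq_norm_sq]
    conv_lhs => rw [hp_def, inner_add_right, real_inner_smul_right]
  have hinner : 0 ≤ ⟪p, d⟫ := by
    by_contra! h
    nlinarith [real_inner_le_norm p y, norm_nonneg y]
  have hgram := norm_add_smul_sq_mul_sub_inner_sq y d s
  have hy2 : ‖y‖ ^ 2 * ‖d‖ ^ 2 ≤ r ^ 2 * ‖d‖ ^ 2 := by gcongr
  rw [← sqrt_sq hinner, ← sqrt_sq (norm_nonneg d), ← sqrt_mul' _ (sq_nonneg _)]
  exact sqrt_le_sqrt (by nlinarith [sq_nonneg ⟪y, d⟫])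

lemma sqrt_sub_sq_mul_norm_lt_inner_add_smul {r t : ℝ} {x u : E} (hr : 0 < r) (hx : x ≠ 0)
    (ht : 0 < t) (hu : √(‖x‖ ^ 2 - r ^ 2) * ‖u‖ ≤ ⟪x, u⟫) :
    √(‖x‖ ^ 2 - r ^ 2) * ‖u + t • x‖ < ⟪x, u + t • x⟫ := by
  set c := √(‖x‖ ^ 2 - r ^ 2)
  have hx' : 0 < ‖x‖ := norm_pos_iff.2 hx
  have hc : c < ‖x‖ := (sqrt_lt' hx').2 (by nlinarith)
  calc c * ‖u + t • x‖ ≤ c * (‖u‖ + t * ‖x‖) := by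
        gcongr
        exact (norm_add_le _ _).trans_eq (by rw [norm_smul, norm_of_nonneg ht.le])
    _ < ⟪x, u⟫ + t * ‖x‖ ^ 2 := by nlinarith [mul_lt_mul_of_pos_left hc (mul_pos ht hx')]
    _ = ⟪x, u + t • x⟫ := by
        rw [inner_add_right, real_inner_smul_right, real_inner_self_eq_norm_sq]

lemma exists_mem_ball_mem_segment {r : ℝ} {x u : E} (hr : 0 ≤ r)
    (hu : √(‖x‖ ^ 2 - r ^ 2) * ‖u‖ < ⟪x, u⟫) :
    ∃ w ∈ ball (0 : E) r, x ∈ segment ℝ w (x + u) := by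
  have hxu : 0 < ⟪x, u⟫ := (by positivity : 0 ≤ √(‖x‖ ^ 2 - r ^ 2) * ‖u‖).trans_lt hu
  have hu0 : 0 < ‖u‖ := norm_pos_iff.2 (by rintro rfl; simp at hxu)
  have hsq : (‖x‖ ^ 2 - r ^ 2) * ‖u‖ ^ 2 < ⟪x, u⟫ ^ 2 := by
    rcases le_total 0 (‖x‖ ^ 2 - r ^ 2) with h | h
    · calc _ = (√(‖x‖ ^ 2 - r ^ 2) * ‖u‖) ^ 2 := by rw [mul_pow, sq_sqrt h]
        _ < _ := pow_lt_pow_left₀ hu (by positivity) two_ne_zero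
    · exact (mul_nonpos_of_nonpos_of_nonneg h (sq_nonneg _)).trans_lt (by positivity)
  set a := ⟪x, u⟫ / ‖u‖ ^ 2
  have ha : a * ‖u‖ ^ 2 = ⟪x, u⟫ := div_mul_cancel₀ _ (by positivity)
  refine ⟨x - a • u, ?_, ?_⟩
  · rw [mem_ball_zero_iff]
    refine lt_of_pow_lt_pow_left₀ 2 hr ?_
    rw [norm_sub_sq_real, norm_smul, real_inner_smul_right, Real.norm_eq_abs, mul_pow, sq_abs]
    nlinarith
  · rw [mem_segment_iff_sameRay, sub_sub_cancel, add_sub_cancel_left]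
    exact SameRay.sameRay_nonneg_smul_left u (div_nonneg hxu.le (by positivity))

lemma add_notMem_of_segment_subset {Ω : Set E} {r : ℝ} {x u : E} (hΩ : IsOpen Ω)
    (hstar : ∀ w ∈ ball (0 : E) r, ∀ z ∈ Ω, segment ℝ w z ⊆ Ω) (hr : 0 < r) (hx : x ∉ Ω)
    (hu : √(‖x‖ ^ 2 - r ^ 2) * ‖u‖ ≤ ⟪x, u⟫) : x + u ∉ Ω := by
  intro hxu
  have hx0 : x ≠ 0 := by
    rintro rfl
    exact hx (hstar 0 (mem_ball_self hr) _ hxu (left_mem_segment ℝ _ _))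
  have hnear : ∀ᶠ t in 𝓝 (0 : ℝ), x + (u + t • x) ∈ Ω :=
    ((by fun_prop : Continuous fun t : ℝ => x + (u + t • x)).tendsto 0).eventually
      (hΩ.mem_nhds (by simpa using hxu))
  obtain ⟨t, ht, hxt⟩ :=
    ((eventually_mem_nhdsWithin (s := Ioi 0)).and (hnear.filter_mono nhdsWithin_le_nhds)).exists
  obtain ⟨w, hw, hxw⟩ :=
    exists_mem_ball_mem_segment hr.le (sqrt_sub_sq_mul_norm_lt_inner_add_smul hr hx0 ht hu)
  exact hx (hstar w hw _ hxt hxw)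

end Shadow

lemma exists_frontier_and_mem_near_of_segment {F : Type*} [NormedAddCommGroup F]
    [NormedSpace ℝ F] {Ω : Set F} {x y z : F} {ε : ℝ} (hΩ : IsOpen Ω) (hx : x ∈ Ω)
    (hz : z ∈ segment ℝ y x) (hzΩ : z ∉ Ω) (hε : 0 < ε) :
    ∃ s t : ℝ, 0 ≤ s ∧ s < t ∧ y + s • (x - y) ∈ frontier Ω ∧ y + t • (x - y) ∈ Ω ∧
      dist (y + t • (x - y)) (y + s • (x - y)) < ε := by
  set γ : ℝ → F := fun t => y + t • (x - y)
  have hγ : Continuous γ := by fun_prop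
  rw [segment_eq_image'] at hz
  obtain ⟨t₀, ht₀, rfl⟩ := hz
  obtain ⟨s, ⟨⟨hs0, hs1⟩, hsΩ⟩, hlast⟩ :=
    (isCompact_Icc.inter_right (hΩ.isClosed_compl.preimage hγ)).exists_isGreatest ⟨t₀, ht₀, hzΩ⟩
  have hs1' : s < 1 := hs1.lt_of_ne (by rintro rfl; simp [γ] at hsΩ; exact hsΩ hx)
  have hafter : ∀ᶠ t in 𝓝[>] s, γ t ∈ Ω := by
    filter_upwards [Ioo_mem_nhdsGT hs1'] with t ⟨hst, ht1⟩
    by_contra h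
    exact (hlast ⟨⟨hs0.trans hst.le, ht1.le⟩, h⟩).not_gt hst
  have hlim : Tendsto γ (𝓝[>] s) (𝓝 (γ s)) := (hγ.tendsto s).mono_left nhdsWithin_le_nhds
  have hfront : γ s ∈ frontier Ω := by
    rw [hΩ.frontier_eq]
    exact ⟨mem_closure_of_tendsto hlim hafter, hsΩ⟩
  obtain ⟨t, hst, htΩ, htε⟩ :=
    (eventually_mem_nhdsWithin.and (hafter.and (hlim.eventually (ball_mem_nhds _ hε)))).exists
  exact ⟨s, t, hs0, hst, hfront, htΩ, htε⟩

theorem statement10_general (n : ℕ) (r : ℝ) (hr : 0 < r)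
    (Ω : Set (EuclideanSpace ℝ (Fin n))) (hopen : IsOpen Ω)
    (hbdd : Bornology.IsBounded Ω) (hball : ball (0 : EuclideanSpace ℝ (Fin n)) r ⊆ Ω) :
    StarShaped n r Ω ↔ ∃ ε : ℝ, 0 < ε ∧ ∀ x ∈ frontier Ω, exteriorCone n r ε x ⊆ Ωᶜ := by
  have notMem_of_frontier : ∀ {x}, x ∈ frontier Ω → x ∉ Ω := fun hx hxΩ =>
    (hopen.inter_frontier_eq.subset ⟨hxΩ, hx⟩).elim
  constructor
  · rintro ⟨-, -, hstar⟩
    refine ⟨1, one_pos, fun x hx _ ⟨⟨u, hu, hxu⟩, _⟩ => hxu ▸ ?_⟩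
    exact add_notMem_of_segment_subset hopen hstar hr (notMem_of_frontier hx)
      (mem_cone_arcsin_iff.1 hu)
  · rintro ⟨ε, hε, hEC⟩
    refine ⟨hopen, hbdd, fun y hy x hx z hz => by_contra fun hzΩ => ?_⟩
    obtain ⟨s, t, hs, hst, hp, hq, hqp⟩ :=
      exists_frontier_and_mem_near_of_segment hopen hx hz hzΩ hε
    have hrp : r ≤ ‖y + s • (x - y)‖ :=
      not_lt.1 fun h => notMem_of_frontier hp (hball (mem_ball_zero_iff.2 h))
    have hcone := smul_mem_cone (mem_cone_arcsin_iff.2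
      (sqrt_sub_sq_mul_norm_le_inner (mem_ball_zero_iff.1 hy) hrp hs)) (sub_nonneg.2 hst.le)
    refine hEC _ hp ⟨⟨_, hcone, ?_⟩, hqp⟩ hq
    module

/-- A bounded open set `Ω` containing `B_r(0)` belongs to `S_r` if and only if there is
`ε > 0` such that for every boundary point `x ∈ ∂Ω` the exterior cone `EC(x,r)` is
contained in `Ωᶜ`. -/
theorem statement10 (n : ℕ) (hn : 2 ≤ n) (r : ℝ) (hr : 0 < r)
    (Ω : Set (EuclideanSpace ℝ (Fin n))) (hopen : IsOpen Ω)
    (hbdd : Bornology.IsBounded Ω) (hball : ball (0 : EuclideanSpace ℝ (Fin n)) r ⊆ Ω) :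
    StarShaped n r Ω ↔ ∃ ε : ℝ, 0 < ε ∧ ∀ x ∈ frontier Ω, exteriorCone n r ε x ⊆ Ωᶜ :=
  statement10_general n r hr Ω hopen hbdd hball
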